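/- arXiv:2112.09055 — 3 statements merged into one kernel-verified Lean document; each statement's English description precedes it below -/
import Mathlib

section
/- If G is a graph whose minimum and maximum degrees satisfy d_max/d_min = O(1) and whose conductance satisfies Φ_G = Ω(1), then every HC tree of G is an O(1)-approximation of the optimal Dasgupta cost: cost_G(T) ≤ C · OPT_G for a constant C depending only on Φ_G and d_max/d_min. -/
open Finset

/-- A hierarchical clustering (HC) tree: a binary tree with vertex-labelled leaves. -/
inductive HCTree (V : Type) where
  | leaf (v : V) : HCTree V
  | node (l r : HCTree V) : HCTree V

namespace HCTree

variable {V : Type} [Fintype V] [DecidableEq V]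

/-- The list of leaf labels of an HC tree. -/
def leafList : HCTree V → List V
  | leaf v => [v]
  | node l r => leafList l ++ leafList r

/-- The set of leaves of an HC tree. -/
def leaves (t : HCTree V) : Finset V := t.leafList.toFinset

/-- Total weight of (ordered) pairs between two vertex sets:
`w(S,T) = ∑_{u ∈ S, v ∈ T} w(u,v)`. -/
def cut (w : V → V → ℝ) (S T : Finset V) : ℝ := ∑ u ∈ S, ∑ v ∈ T, w u v

/-- The (weighted) degree of a vertex: `d_u = ∑_v w(u,v)`. -/
def deg (w : V → V → ℝ) (u : V) : ℝ := ∑ v, w u v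

/-- The volume of a vertex set: `vol(S) = ∑_{u ∈ S} d_u`. -/
def vol (w : V → V → ℝ) (S : Finset V) : ℝ := ∑ u ∈ S, deg w u

/-- Dasgupta's cost of an HC tree, via the equivalent internal-node formula:
`cost(T) = ∑_{N → (N₁,N₂)} |leaves(T[N])| · w(leaves(N₁), leaves(N₂))`. -/
def cost (w : V → V → ℝ) : HCTree V → ℝ
  | leaf _ => 0
  | node l r =>
      ((leaves (node l r)).card : ℝ) * cut w (leaves l) (leaves r)
        + cost w l + cost w r

/-- `t` is an HC tree of the graph on vertex set `V`: its leaves are distinct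
and are exactly the vertices of `V`. -/
def isHC (t : HCTree V) : Prop := t.leafList.Nodup ∧ t.leaves = Finset.univ

end HCTree


/-!
Charging every pair at most `n = |V|` gives `cost(T) ≤ (n/2)·vol(V) ≤ n²·d_max/2` for every HC
tree `T`. Conversely, descending in any HC tree from the root into the larger child until at most
`2n/3` leaves remain produces a leaf set `S` with `n/3 ≤ |S| ≤ 2n/3` whose cut to the rest of the
tree is charged at least `2n/3` per unit of weight. Conductance makes that cut weigh at least
`Φ·d_min·n/3`, so every HC tree costs at least `(2/9)·Φ·d_min·n²`; the two bounds differ by the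
factor `(9/(4Φ))·(d_max/d_min)`.
-/

namespace HCTree

variable {V : Type} (w : V → V → ℝ)

section Cut

theorem cut_nonneg (hw : ∀ u v, 0 ≤ w u v) (S T : Finset V) : 0 ≤ cut w S T :=
  sum_nonneg fun u _ => sum_nonneg fun v _ => hw u v

theorem cut_mono (hw : ∀ u v, 0 ≤ w u v) {S S' T T' : Finset V} (hS : S' ⊆ S) (hT : T' ⊆ T) :
    cut w S' T' ≤ cut w S T :=
  (sum_le_sum fun u _ => sum_le_sum_of_subset_of_nonneg hT fun v _ _ => hw u v).trans
    (sum_le_sum_of_subset_of_nonneg hS fun u _ _ => sum_nonneg fun v _ => hw u v)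

theorem cut_comm (hsymm : ∀ u v, w u v = w v u) (S T : Finset V) : cut w S T = cut w T S := by
  rw [cut, cut, sum_comm]
  exact sum_congr rfl fun v _ => sum_congr rfl fun u _ => hsymm u v

@[simp]
theorem cut_empty_right (S : Finset V) : cut w S ∅ = 0 := by
  simp [cut]

variable [DecidableEq V]

theorem cut_union_left {S₁ S₂ : Finset V} (h : Disjoint S₁ S₂) (T : Finset V) :
    cut w (S₁ ∪ S₂) T = cut w S₁ T + cut w S₂ T :=
  sum_union h

theorem cut_union_right (S : Finset V) {T₁ T₂ : Finset V} (h : Disjoint T₁ T₂) :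
    cut w S (T₁ ∪ T₂) = cut w S T₁ + cut w S T₂ := by
  unfold cut
  rw [← sum_add_distrib]
  exact sum_congr rfl fun u _ => sum_union h

end Cut

theorem deg_nonneg [Fintype V] (hw : ∀ u v, 0 ≤ w u v) (u : V) : 0 ≤ deg w u :=
  sum_nonneg fun v _ => hw u v

section Vol

variable [Fintype V]

theorem card_mul_le_vol {m : ℝ} (hm : ∀ u, m ≤ deg w u) (S : Finset V) :
    #S * m ≤ vol w S := by
  have h := card_nsmul_le_sum S (deg w) m fun u _ => hm u
  rwa [nsmul_eq_mul] at h

theorem vol_le_card_mul {M : ℝ} (hM : ∀ u, deg w u ≤ M) (S : Finset V) :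
    vol w S ≤ #S * M := by
  have h := sum_le_card_nsmul S (deg w) M fun u _ => hM u
  rwa [nsmul_eq_mul] at h

theorem vol_eq_cut_univ (S : Finset V) : vol w S = cut w S univ :=
  rfl

variable [DecidableEq V]

theorem mul_min_vol_le_cut (hsymm : ∀ u v, w u v = w v u) {Φ : ℝ} (hΦ0 : 0 ≤ Φ)
    (hΦ : ∀ S : Finset V, S.Nonempty → vol w S ≤ vol w univ / 2 → Φ * vol w S ≤ cut w S Sᶜ)
    {S : Finset V} (hS : S.Nonempty) (hSc : Sᶜ.Nonempty) :
    Φ * min (vol w S) (vol w Sᶜ) ≤ cut w S Sᶜ := by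
  have hsum : vol w S + vol w Sᶜ = vol w univ := sum_add_sum_compl S (deg w)
  by_cases hS2 : vol w S ≤ vol w univ / 2
  · exact (mul_le_mul_of_nonneg_left (min_le_left _ _) hΦ0).trans (hΦ S hS hS2)
  · have hcut := hΦ Sᶜ hSc (by linarith)
    rw [compl_compl, cut_comm w hsymm] at hcut
    exact (mul_le_mul_of_nonneg_left (min_le_right _ _) hΦ0).trans hcut

end Vol

section Tree

variable [DecidableEq V]

@[simp]
theorem leaves_leaf (v : V) : leaves (leaf v) = {v} := by
  simp [leaves, leafList]

@[simp]
theorem leaves_node (l r : HCTree V) : leaves (node l r) = leaves l ∪ leaves r := by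
  simp [leaves, leafList]

theorem leaves_node_comm (l r : HCTree V) : leaves (node l r) = leaves (node r l) := by
  simp [union_comm]

theorem leaves_nonempty (t : HCTree V) : t.leaves.Nonempty := by
  induction t with
  | leaf v => simp
  | node l r ihl _ => simpa using Or.inl ihl

theorem nodup_leafList_node {l r : HCTree V} :
    (node l r).leafList.Nodup ↔
      l.leafList.Nodup ∧ r.leafList.Nodup ∧ Disjoint l.leaves r.leaves := by
  rw [leafList, List.nodup_append', leaves, leaves, List.disjoint_toFinset_iff_disjoint]

theorem card_leaves_node {l r : HCTree V} (h : Disjoint l.leaves r.leaves) :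
    #(node l r).leaves = #l.leaves + #r.leaves := by
  rw [leaves_node, card_union_of_disjoint h]

theorem cost_nonneg (hw : ∀ u v, 0 ≤ w u v) (t : HCTree V) : 0 ≤ cost w t := by
  induction t with
  | leaf v => exact le_rfl
  | node l r ihl ihr =>
    have := cut_nonneg w hw l.leaves r.leaves
    simp only [cost]
    positivity

theorem cost_node_comm (hsymm : ∀ u v, w u v = w v u) (l r : HCTree V) :
    cost w (node l r) = cost w (node r l) := by
  simp only [cost, leaves_node_comm l r, cut_comm w hsymm l.leaves]
  ring

theorem cost_eq_zero_of_card_leaves_le_one {t : HCTree V} (hnd : t.leafList.Nodup)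
    (ht : #t.leaves ≤ 1) : cost w t = 0 := by
  cases t with
  | leaf v => rfl
  | node l r =>
    rw [card_leaves_node (nodup_leafList_node.1 hnd).2.2] at ht
    have := (leaves_nonempty l).card_pos
    have := (leaves_nonempty r).card_pos
    omega

theorem cost_le_card_leaves_mul_cut (hw : ∀ u v, 0 ≤ w u v) (hsymm : ∀ u v, w u v = w v u)
    (t : HCTree V) (hnd : t.leafList.Nodup) :
    cost w t ≤ #t.leaves / 2 * cut w t.leaves t.leaves := by
  induction t with
  | leaf v => simpa [cost, cut] using hw v v
  | node l r ihl ihr =>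
    obtain ⟨hl, hr, hdisj⟩ := nodup_leafList_node.1 hnd
    have hcard : (#(node l r).leaves : ℝ) = #l.leaves + #r.leaves := by
      exact_mod_cast card_leaves_node hdisj
    have hsplit : cut w (node l r).leaves (node l r).leaves
        = cut w l.leaves l.leaves + cut w r.leaves r.leaves + 2 * cut w l.leaves r.leaves := by
      rw [leaves_node, cut_union_left w hdisj, cut_union_right w _ hdisj,
        cut_union_right w _ hdisj, cut_comm w hsymm r.leaves l.leaves]
      ring
    have hll := mul_nonneg (Nat.cast_nonneg #r.leaves) (cut_nonneg w hw l.leaves l.leaves)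
    have hrr := mul_nonneg (Nat.cast_nonneg #l.leaves) (cut_nonneg w hw r.leaves r.leaves)
    simp only [cost]
    rw [hsplit, hcard]
    linarith [ihl hl, ihr hr]

def HasBalancedCut (n : ℕ) (t : HCTree V) : Prop :=
  ∃ S ⊆ t.leaves, n ≤ 3 * #S ∧ 3 * #S ≤ 2 * n ∧
    (2 * n / 3 : ℝ) * cut w S (t.leaves \ S) ≤ cost w t

theorem hasBalancedCut_node_comm (hsymm : ∀ u v, w u v = w v u) {n : ℕ} (l r : HCTree V) :
    HasBalancedCut w n (node l r) ↔ HasBalancedCut w n (node r l) := by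
  rw [HasBalancedCut, HasBalancedCut, leaves_node_comm l r, cost_node_comm w hsymm l r]

theorem mul_cut_sdiff_leaves_node_le_cost (hw : ∀ u v, 0 ≤ w u v) {l r : HCTree V}
    {S : Finset V} {c : ℝ} (hdisj : Disjoint l.leaves r.leaves) (hS : S ⊆ l.leaves)
    (hcN : c ≤ #(node l r).leaves) (hl : c * cut w S (l.leaves \ S) ≤ cost w l) :
    c * cut w S ((node l r).leaves \ S) ≤ cost w (node l r) := by
  have hsplit : (node l r).leaves \ S = (l.leaves \ S) ∪ r.leaves := by
    rw [leaves_node, union_sdiff_distrib, sdiff_eq_self_of_disjoint (hdisj.symm.mono_right hS)]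
  have hSr : c * cut w S r.leaves ≤ #(node l r).leaves * cut w l.leaves r.leaves :=
    mul_le_mul hcN (cut_mono w hw hS subset_rfl) (cut_nonneg w hw _ _) (by positivity)
  rw [hsplit, cut_union_right w _ (hdisj.mono_left sdiff_subset), mul_add]
  simp only [cost]
  linarith [cost_nonneg w hw r]

/-- If the larger child `l` is still big, recurse into it; otherwise `l` itself is balanced. -/
theorem hasBalancedCut_node_of_card_le (hw : ∀ u v, 0 ≤ w u v) {n : ℕ} {l r : HCTree V}
    (hdisj : Disjoint l.leaves r.leaves) (hrl : #r.leaves ≤ #l.leaves)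
    (ht : 2 * n ≤ 3 * #(node l r).leaves)
    (ihl : 2 * n ≤ 3 * #l.leaves → HasBalancedCut w n l) : HasBalancedCut w n (node l r) := by
  rw [card_leaves_node hdisj] at ht
  have hcN : (2 * n / 3 : ℝ) ≤ #(node l r).leaves := by
    rw [div_le_iff₀ (by norm_num), card_leaves_node hdisj]
    exact_mod_cast (by omega : 2 * n ≤ (#l.leaves + #r.leaves) * 3)
  by_cases hlarge : 2 * n ≤ 3 * #l.leaves
  · obtain ⟨S, hS, hnS, hSn, hcost⟩ := ihl hlarge
    exact ⟨S, hS.trans (by simp), hnS, hSn,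
      mul_cut_sdiff_leaves_node_le_cost w hw hdisj hS hcN hcost⟩
  · refine ⟨l.leaves, by simp, by omega, by omega,
      mul_cut_sdiff_leaves_node_le_cost w hw hdisj subset_rfl hcN ?_⟩
    simpa using cost_nonneg w hw l

theorem hasBalancedCut_of_nodup (hw : ∀ u v, 0 ≤ w u v) (hsymm : ∀ u v, w u v = w v u) {n : ℕ}
    (hn : 2 ≤ n) (t : HCTree V) (hnd : t.leafList.Nodup) (ht : 2 * n ≤ 3 * #t.leaves) :
    HasBalancedCut w n t := by
  induction t with
  | leaf v =>
    simp only [leaves_leaf, card_singleton] at ht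
    omega
  | node l r ihl ihr =>
    obtain ⟨hl, hr, hdisj⟩ := nodup_leafList_node.1 hnd
    rcases le_total #r.leaves #l.leaves with hrl | hlr
    · exact hasBalancedCut_node_of_card_le w hw hdisj hrl ht (ihl hl)
    · refine (hasBalancedCut_node_comm w hsymm l r).2 ?_
      exact hasBalancedCut_node_of_card_le w hw hdisj.symm hlr
        (by rwa [leaves_node_comm]) (ihr hr)

end Tree

section HC

variable [Fintype V] [DecidableEq V]

theorem cost_le_of_isHC (hw : ∀ u v, 0 ≤ w u v) (hsymm : ∀ u v, w u v = w v u) {M : ℝ}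
    (hM : ∀ u, deg w u ≤ M) {t : HCTree V} (ht : isHC t) :
    cost w t ≤ (Fintype.card V : ℝ) ^ 2 * M / 2 := by
  have hcost := cost_le_card_leaves_mul_cut w hw hsymm t ht.1
  rw [ht.2, ← vol_eq_cut_univ, card_univ] at hcost
  have hvol := vol_le_card_mul w hM univ
  rw [card_univ] at hvol
  calc cost w t ≤ Fintype.card V / 2 * vol w univ := hcost
    _ ≤ Fintype.card V / 2 * (Fintype.card V * M) := by gcongr
    _ = (Fintype.card V : ℝ) ^ 2 * M / 2 := by ring

theorem le_cost_of_isHC (hw : ∀ u v, 0 ≤ w u v) (hsymm : ∀ u v, w u v = w v u) {Φ : ℝ}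
    (hΦ0 : 0 ≤ Φ)
    (hΦ : ∀ S : Finset V, S.Nonempty → vol w S ≤ vol w univ / 2 → Φ * vol w S ≤ cut w S Sᶜ)
    {m : ℝ} (hm0 : 0 ≤ m) (hm : ∀ u, m ≤ deg w u) (hn : 2 ≤ Fintype.card V)
    {t : HCTree V} (ht : isHC t) :
    2 / 9 * Φ * m * (Fintype.card V : ℝ) ^ 2 ≤ cost w t := by
  set n := Fintype.card V
  obtain ⟨S, -, hnS, hSn, hcost⟩ :=
    hasBalancedCut_of_nodup w hw hsymm hn t ht.1 (by rw [ht.2, card_univ]; omega)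
  rw [ht.2, ← compl_eq_univ_sdiff] at hcost
  have hnSc : n ≤ 3 * #Sᶜ := by
    rw [card_compl]
    have := card_le_univ S
    omega
  have hvol_ge {A : Finset V} (hA : n ≤ 3 * #A) : m * (n / 3) ≤ vol w A := by
    refine le_trans ?_ (card_mul_le_vol w hm A)
    rw [mul_comm]
    gcongr
    rw [div_le_iff₀ (by norm_num)]
    exact_mod_cast (by omega : n ≤ #A * 3)
  have hcut := mul_min_vol_le_cut w hsymm hΦ0 hΦ (S := S) (card_pos.1 (by omega))
    (card_pos.1 (by omega))
  calc 2 / 9 * Φ * m * (n : ℝ) ^ 2 = 2 * n / 3 * (Φ * (m * (n / 3))) := by ring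
    _ ≤ 2 * n / 3 * cut w S Sᶜ := by
      gcongr
      exact (mul_le_mul_of_nonneg_left (le_min (hvol_ge hnS) (hvol_ge hnSc)) hΦ0).trans hcut
    _ ≤ cost w t := hcost

end HC

end HCTree

open HCTree in
theorem every_tree_constant_approx_general {V : Type} [Fintype V] [DecidableEq V] [Nonempty V]
    (w : V → V → ℝ) (hw : ∀ u v, 0 ≤ w u v) (hsymm : ∀ u v, w u v = w v u)
    (Φ : ℝ) (hΦ0 : 0 < Φ)
    (hΦ : ∀ S : Finset V, S.Nonempty → vol w S ≤ vol w (Finset.univ : Finset V) / 2 →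
      Φ * vol w S ≤ cut w S Sᶜ)
    (κ : ℝ)
    (hκ : Finset.univ.sup' Finset.univ_nonempty (deg w)
            ≤ κ * Finset.univ.inf' Finset.univ_nonempty (deg w))
    (Tstar : HCTree V) (hTstar : isHC Tstar)
    (T : HCTree V) (hT : isHC T) :
    cost w T ≤ 9 / (4 * Φ) *
        ((Finset.univ.sup' Finset.univ_nonempty (deg w))
          / (Finset.univ.inf' Finset.univ_nonempty (deg w)))
        * cost w Tstar := by
  set M := univ.sup' univ_nonempty (deg w)
  set m := univ.inf' univ_nonempty (deg w)
  have hM : ∀ u, deg w u ≤ M := fun u => le_sup' (deg w) (mem_univ u)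
  have hm : ∀ u, m ≤ deg w u := fun u => inf'_le (deg w) (mem_univ u)
  have hm0 : 0 ≤ m := le_inf' _ _ fun u _ => deg_nonneg w hw u
  have hM0 : 0 ≤ M := hm0.trans ((hm (Classical.arbitrary V)).trans (hM _))
  have hRHS : 0 ≤ 9 / (4 * Φ) * (M / m) * cost w Tstar := by
    have := cost_nonneg w hw Tstar
    positivity
  rcases lt_or_ge (Fintype.card V) 2 with hn | hn
  · rw [cost_eq_zero_of_card_leaves_le_one w hT.1 (by rw [hT.2, card_univ]; omega)]
    exact hRHS
  rcases hm0.eq_or_lt with hm_eq | hm_pos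
  · -- `M / 0 = 0`, so the claim reads `cost w T ≤ 0`; `hκ` gives `M ≤ 0`.
    rw [← hm_eq, mul_zero] at hκ
    rw [← hm_eq, div_zero, mul_zero, zero_mul]
    have := cost_le_of_isHC w hw hsymm hM hT
    nlinarith [sq_nonneg (Fintype.card V : ℝ)]
  calc cost w T ≤ (Fintype.card V : ℝ) ^ 2 * M / 2 := cost_le_of_isHC w hw hsymm hM hT
    _ = 9 / (4 * Φ) * (M / m) * (2 / 9 * Φ * m * (Fintype.card V : ℝ) ^ 2) := by
      field_simp
      ring
    _ ≤ 9 / (4 * Φ) * (M / m) * cost w Tstar := by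
      gcongr
      exact le_cost_of_isHC w hw hsymm hΦ0.le hΦ hm0 hm hn hTstar

open HCTree in
/-- If `G` has `d_max/d_min = O(1)` and conductance `Φ_G = Ω(1)`, then every
HC tree of `G` is an `O(1)`-approximation of the optimal Dasgupta cost; concretely,
`cost_G(T) ≤ (9/(4Φ_G)) · (d_max/d_min) · OPT_G`, a constant depending only on `Φ_G`
and `d_max/d_min`. -/
theorem every_tree_constant_approx {V : Type} [Fintype V] [DecidableEq V] [Nonempty V]
    (w : V → V → ℝ) (hw : ∀ u v, 0 ≤ w u v) (hsymm : ∀ u v, w u v = w v u)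
    (Φ : ℝ) (hΦ0 : 0 < Φ)
    (hΦ : ∀ S : Finset V, S.Nonempty → vol w S ≤ vol w (Finset.univ : Finset V) / 2 →
      Φ * vol w S ≤ cut w S Sᶜ)
    (κ : ℝ)
    (hκ : Finset.univ.sup' Finset.univ_nonempty (deg w)
            ≤ κ * Finset.univ.inf' Finset.univ_nonempty (deg w))
    (Tstar : HCTree V) (hTstar : isHC Tstar)
    (hopt : ∀ t : HCTree V, isHC t → cost w Tstar ≤ cost w t)
    (T : HCTree V) (hT : isHC T) :
    cost w T ≤ 9 / (4 * Φ) *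
        ((Finset.univ.sup' Finset.univ_nonempty (deg w))
          / (Finset.univ.inf' Finset.univ_nonempty (deg w)))
        * cost w Tstar :=
  every_tree_constant_approx_general w hw hsymm Φ hΦ0 hΦ κ hκ Tstar hTstar T hT
end

section
/- In a dyadic degree-ordered HC tree, for every interval (2^{s-1}, 2^s] there are at most 3 critical nodes N with |N| ∈ (2^{s-1}, 2^s]. Consequently, if N is a critical node of a tree T_i and the critical nodes of all ℓ ≤ k trees of size at most |N| are merged into a single subtree whose parent is parent_{T_PM}(N), then |parent_{T_PM}(N)| ≤ 12k·|N| ≤ 6k·|parent_{T_i}(N)|. -/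
/-!
Along the dense branch the sizes `|B_2|, …, |B_{r+1}|` halve at every step. Hence no two of them
lie in the same dyadic interval, and those of size at most `C` form a geometric series of sum at
most `2C`. The two remaining critical nodes `B_1` and `A_{r+1}` add at most one node, resp. `C`,
each, so every tree contributes at most `4|N|` to `parent_{T_PM}(N)`; with `ℓ ≤ k` trees and
`2|N| ≤ |parent_{T_i}(N)|` the bounds follow.
-/

open Finset

def HalvesOn (f : ℕ → ℕ) (a b : ℕ) : Prop :=
  ∀ j, a ≤ j → j < b → f j = 2 * f (j + 1)

namespace HalvesOn

variable {f : ℕ → ℕ} {a b : ℕ}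

theorem mono_left {a' : ℕ} (h : HalvesOn f a b) (ha : a ≤ a') : HalvesOn f a' b :=
  fun j hj hjb => h j (ha.trans hj) hjb

theorem two_mul_le (h : HalvesOn f a b) {j k : ℕ} (hj : a ≤ j) (hjk : j < k) (hk : k ≤ b) :
    2 * f k ≤ f j := by
  induction k, hjk using Nat.le_induction with
  | base => exact (h j hj hk).ge
  | succ k hjk ih =>
    have := h k (by omega) hk
    have := ih (by omega)
    omega

theorem sum_Icc_add_eq (h : HalvesOn f a b) (hab : a ≤ b) :
    ∑ j ∈ Icc a b, f j + f b = 2 * f a := by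
  induction b, hab using Nat.le_induction with
  | base => simp [two_mul]
  | succ b hab ih =>
    rw [sum_Icc_succ_top (by omega), add_assoc, ← two_mul, ← h b hab (by omega),
      ih (fun j hj hjb => h j hj (by omega))]

theorem sum_Icc_le (h : HalvesOn f a b) : ∑ j ∈ Icc a b, f j ≤ 2 * f a := by
  rcases le_or_gt a b with hab | hba
  · exact (h.sum_Icc_add_eq hab).symm ▸ Nat.le_add_right _ _
  · simp [Icc_eq_empty_of_lt hba]

theorem card_filter_le_one (h : HalvesOn f a b) (m : ℕ) :
    #{j ∈ Icc a b | m < 2 * f j ∧ f j ≤ m} ≤ 1 := by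
  refine card_le_one.mpr fun x hx y hy => ?_
  simp only [mem_filter, mem_Icc] at hx hy
  by_contra hxy
  rcases Nat.lt_or_gt_of_ne hxy with hlt | hlt
  · have := h.two_mul_le hx.1.1 hlt hy.1.2
    omega
  · have := h.two_mul_le hy.1.1 hlt hx.1.2
    omega

theorem sum_filter_le_le (h : HalvesOn f a b) (C : ℕ) :
    ∑ j ∈ Icc a b with f j ≤ C, f j ≤ 2 * C := by
  set S := {j ∈ Icc a b | f j ≤ C}
  rcases S.eq_empty_or_nonempty with hS | hS
  · simp [hS]
  have hmin : S.min' hS ∈ S := S.min'_mem hS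
  simp only [S, mem_filter, mem_Icc] at hmin
  have hsub : S ⊆ Icc (S.min' hS) b := fun x hx =>
    mem_Icc.mpr ⟨S.min'_le x hx, (mem_Icc.mp (mem_filter.mp hx).1).2⟩
  calc ∑ j ∈ S, f j ≤ ∑ j ∈ Icc (S.min' hS) b, f j := sum_le_sum_of_subset hsub
    _ ≤ 2 * f (S.min' hS) := (h.mono_left hmin.1.1).sum_Icc_le
    _ ≤ 2 * C := Nat.mul_le_mul_left 2 hmin.2

end HalvesOn

theorem sum_Icc_one_eq {M : Type*} [AddCommMonoid M] (g : ℕ → M) (r : ℕ) :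
    ∑ j ∈ Icc 1 (r + 2), g j = g 1 + ∑ j ∈ Icc 2 (r + 1), g j + g (r + 2) := by
  rw [sum_Icc_succ_top (by omega), ← insert_Icc_add_one_left_eq_Icc (by omega),
    sum_insert (by simp)]
  rfl

theorem card_filter_le_three {f : ℕ → ℕ} {r : ℕ} (h : HalvesOn f 2 (r + 1)) (m : ℕ) :
    #{j ∈ Icc 1 (r + 2) | m < 2 * f j ∧ f j ≤ m} ≤ 3 := by
  have hmid := h.card_filter_le_one m
  rw [card_filter] at hmid ⊢
  rw [sum_Icc_one_eq]
  split_ifs <;> omega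

theorem sum_filter_le_le_four_mul {f : ℕ → ℕ} {r : ℕ} (h : HalvesOn f 2 (r + 1)) (C : ℕ) :
    ∑ j ∈ Icc 1 (r + 2) with f j ≤ C, f j ≤ 4 * C := by
  have hmid := h.sum_filter_le_le C
  rw [sum_filter] at hmid ⊢
  rw [sum_Icc_one_eq]
  split_ifs <;> omega

/-- `crit i j` is the size of the critical node `B_j` of `T_i`, the index `r i + 2` standing for
`A_{r_i+1}`, and `par i j` the size of its parent in `T_i`. -/
theorem parent_size_pruned_nodes_general
    (k ℓ : ℕ) (hℓ : ℓ ≤ k)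
    (r : Fin ℓ → ℕ) (crit par : Fin ℓ → ℕ → ℕ)
    (hdouble : ∀ i : Fin ℓ, ∀ j : ℕ, 2 ≤ j → j ≤ r i → crit i j = 2 * crit i (j + 1))
    (hpar : ∀ i : Fin ℓ, ∀ j ∈ Finset.Icc 1 (r i + 2), 2 * crit i j ≤ par i j)
    (i₀ : Fin ℓ) (j₀ : ℕ) (hj₀ : j₀ ∈ Finset.Icc 1 (r i₀ + 2)) :
    (∀ i : Fin ℓ, ∀ s : ℕ,
        ((Finset.Icc 1 (r i + 2)).filter
          (fun j => 2 ^ s < 2 * crit i j ∧ crit i j ≤ 2 ^ s)).card ≤ 3) ∧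
    (∑ i : Fin ℓ, ∑ j ∈ (Finset.Icc 1 (r i + 2)).filter
          (fun j => crit i j ≤ crit i₀ j₀), crit i j) ≤ 12 * k * crit i₀ j₀ ∧
    12 * k * crit i₀ j₀ ≤ 6 * k * par i₀ j₀ := by
  have halves (i : Fin ℓ) : HalvesOn (crit i) 2 (r i + 1) :=
    fun j hj hjr => hdouble i j hj (Nat.le_of_lt_succ hjr)
  refine ⟨fun i s => card_filter_le_three (halves i) (2 ^ s), ?_, ?_⟩
  · calc (∑ i : Fin ℓ, ∑ j ∈ (Icc 1 (r i + 2)).filter (fun j => crit i j ≤ crit i₀ j₀), crit i j)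
        ≤ ∑ _i : Fin ℓ, 4 * crit i₀ j₀ :=
          sum_le_sum fun i _ => sum_filter_le_le_four_mul (halves i) (crit i₀ j₀)
      _ = ℓ * (4 * crit i₀ j₀) := by simp
      _ ≤ 12 * k * crit i₀ j₀ := by nlinarith
  · calc 12 * k * crit i₀ j₀ = 6 * k * (2 * crit i₀ j₀) := by ring
      _ ≤ 6 * k * par i₀ j₀ := Nat.mul_le_mul_left _ (hpar i₀ j₀ hj₀)

/-- In the dyadic degree-ordered HC trees `T_1, …, T_ℓ` (with `ℓ ≤ k`),
the critical nodes of `T_i` are `B_1, …, B_{r_i+1}, A_{r_i+1}`; we record their sizes as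
`crit i j` for `j ∈ [1, r_i + 2]` (index `r_i + 2` standing for `A_{r_i+1}`). By construction
`|B_j| = 2·|B_{j+1}|` for `2 ≤ j ≤ r_i`, `|A_{r_i+1}| = |B_{r_i+1}|`, every critical node `N`
satisfies `2·|N| ≤ |parent_{T_i}(N)|`, and in the merged tree the parent of `N` consists of all
critical nodes of size at most `|N|`.  Then:
(1) every dyadic interval `(2^{s-1}, 2^s]` contains at most `3` critical node sizes of each
tree, and (2) for every critical node `N`,
`|parent_{T_PM}(N)| ≤ 12·k·|N| ≤ 6·k·|parent_{T_i}(N)|`. -/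
theorem parent_size_pruned_nodes
    (k ℓ : ℕ) (hℓ : ℓ ≤ k)
    (r : Fin ℓ → ℕ) (crit par : Fin ℓ → ℕ → ℕ)
    (hpos : ∀ i : Fin ℓ, ∀ j ∈ Finset.Icc 1 (r i + 2), 1 ≤ crit i j)
    (hdouble : ∀ i : Fin ℓ, ∀ j : ℕ, 2 ≤ j → j ≤ r i → crit i j = 2 * crit i (j + 1))
    (hlast : ∀ i : Fin ℓ, crit i (r i + 2) = crit i (r i + 1))
    (hpar : ∀ i : Fin ℓ, ∀ j ∈ Finset.Icc 1 (r i + 2), 2 * crit i j ≤ par i j)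
    (i₀ : Fin ℓ) (j₀ : ℕ) (hj₀ : j₀ ∈ Finset.Icc 1 (r i₀ + 2)) :
    (∀ i : Fin ℓ, ∀ s : ℕ,
        ((Finset.Icc 1 (r i + 2)).filter
          (fun j => 2 ^ s < 2 * crit i j ∧ crit i j ≤ 2 ^ s)).card ≤ 3) ∧
    (∑ i : Fin ℓ, ∑ j ∈ (Finset.Icc 1 (r i + 2)).filter
          (fun j => crit i j ≤ crit i₀ j₀), crit i j) ≤ 12 * k * crit i₀ j₀ ∧
    12 * k * crit i₀ j₀ ≤ 6 * k * par i₀ j₀ :=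
  parent_size_pruned_nodes_general k ℓ hℓ r crit par hdouble hpar i₀ j₀ hj₀
end

section
/- Let core(P_i) ⊆ P_i ⊆ V with Φ_G(core(P_i)) ≤ φ_out/(k+1), and suppose w(P_i\core(P_i) → core(P_i)) ≥ w(P_i\core(P_i) → V\P_i)/(k-1) when k ≥ 2. Then Φ_G(P_i) ≤ k · Φ_G(core(P_i)). -/
open Finset

variable {V : Type} [Fintype V] [DecidableEq V]

/-- Total weight of (ordered) pairs between two vertex sets:
`w(S,T) = ∑_{u ∈ S, v ∈ T} w(u,v)`. -/
def cut (w : V → V → ℝ) (S T : Finset V) : ℝ := ∑ u ∈ S, ∑ v ∈ T, w u v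

/-- The (weighted) degree of a vertex: `d_u = ∑_v w(u,v)`. -/
def deg (w : V → V → ℝ) (u : V) : ℝ := ∑ v, w u v

/-- The volume of a vertex set: `vol(S) = ∑_{u ∈ S} d_u`. -/
def vol (w : V → V → ℝ) (S : Finset V) : ℝ := ∑ u ∈ S, deg w u

/-- The conductance of a vertex set: `Φ_G(S) = w(S, V∖S) / vol(S)`. -/
noncomputable def condOf (w : V → V → ℝ) (S : Finset V) : ℝ := cut w S Sᶜ / vol w S

/-- `w(S → T) = w(S, T ∖ S)`. -/
def wto (w : V → V → ℝ) (S T : Finset V) : ℝ := cut w S (T \ S)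

/-- The relative conductance
`φ(S,P) = w(S → P) / ((vol(P∖S)/vol(P)) · w(S → V∖P))`, set to `1` whenever the
right-hand side is undefined. -/
noncomputable def relCond (w : V → V → ℝ) (S P : Finset V) : ℝ :=
  if (vol w (P \ S) / vol w P) * wto w S ((Finset.univ : Finset V) \ P) ≠ 0 then
    wto w S P / ((vol w (P \ S) / vol w P) * wto w S ((Finset.univ : Finset V) \ P))
  else 1

/-!
Split `P = C ∪ (P ∖ C)`. Then `w(P, V∖P) = w(C, V∖P) + w(P∖C, V∖P)` while
`w(C, V∖C) = w(C, V∖P) + w(P∖C, C)`, so the hypothesis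
`w(P∖C, V∖P) ≤ (k-1) w(P∖C, C)` gives `w(P, V∖P) ≤ k w(C, V∖C)`;
dividing by `vol C ≤ vol P` finishes.
-/

section Cut

variable {α : Type} (w : α → α → ℝ)

lemma cut_nonneg (hw : ∀ u v, 0 ≤ w u v) (S T : Finset α) : 0 ≤ cut w S T :=
  sum_nonneg fun u _ => sum_nonneg fun v _ => hw u v

lemma cut_comm (hsymm : ∀ u v, w u v = w v u) (S T : Finset α) : cut w S T = cut w T S := by
  rw [cut, sum_comm]
  simp_rw [hsymm]
  rfl

lemma cut_union_left [DecidableEq α] {S S' : Finset α} (h : Disjoint S S') (T : Finset α) :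
    cut w (S ∪ S') T = cut w S T + cut w S' T :=
  sum_union h

lemma cut_union_right [DecidableEq α] (S : Finset α) {T T' : Finset α} (h : Disjoint T T') :
    cut w S (T ∪ T') = cut w S T + cut w S T' := by
  simp only [cut, sum_union h, sum_add_distrib]

lemma cut_le_vol [Fintype α] (hw : ∀ u v, 0 ≤ w u v) (S T : Finset α) :
    cut w S T ≤ vol w S :=
  sum_le_sum fun u _ => sum_le_univ_sum_of_nonneg (hw u)

lemma vol_nonneg [Fintype α] (hw : ∀ u v, 0 ≤ w u v) (S : Finset α) : 0 ≤ vol w S :=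
  sum_nonneg fun u _ => sum_nonneg fun v _ => hw u v

lemma vol_mono [Fintype α] (hw : ∀ u v, 0 ≤ w u v) {S T : Finset α} (h : S ⊆ T) :
    vol w S ≤ vol w T :=
  sum_le_sum_of_subset_of_nonneg h fun u _ _ => sum_nonneg fun v _ => hw u v

lemma wto_eq_cut [DecidableEq α] {S T : Finset α} (h : Disjoint S T) : wto w S T = cut w S T := by
  rw [wto, sdiff_eq_self_of_disjoint h.symm]

lemma cut_compl_eq_add_cut_sdiff_compl [Fintype α] [DecidableEq α] {C P : Finset α} (hCP : C ⊆ P) :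
    cut w P Pᶜ = cut w C Pᶜ + cut w (P \ C) Pᶜ := by
  rw [← cut_union_left w disjoint_sdiff, union_sdiff_of_subset hCP]

lemma cut_compl_eq_add_cut_sdiff [Fintype α] [DecidableEq α] (hsymm : ∀ u v, w u v = w v u)
    {C P : Finset α} (hCP : C ⊆ P) :
    cut w C Cᶜ = cut w C Pᶜ + cut w (P \ C) C := by
  have hsplit : Cᶜ = Pᶜ ∪ (P \ C) := by
    ext x
    simp only [mem_compl, mem_union, mem_sdiff]
    have := @hCP x
    tauto
  rw [hsplit, cut_union_right w C (disjoint_compl_left.mono_right sdiff_subset),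
    cut_comm w hsymm C (P \ C)]

lemma cut_compl_le_mul_of_subset [Fintype α] [DecidableEq α] (hw : ∀ u v, 0 ≤ w u v)
    (hsymm : ∀ u v, w u v = w v u)
    {C P : Finset α} (hCP : C ⊆ P) {k : ℝ} (hk : 1 ≤ k)
    (hout : cut w (P \ C) Pᶜ ≤ (k - 1) * cut w (P \ C) C) :
    cut w P Pᶜ ≤ k * cut w C Cᶜ := by
  rw [cut_compl_eq_add_cut_sdiff_compl w hCP, cut_compl_eq_add_cut_sdiff w hsymm hCP]
  nlinarith [cut_nonneg w hw C Pᶜ, cut_nonneg w hw (P \ C) C]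

lemma condOf_le_mul_of_cut_compl_le [Fintype α] [DecidableEq α] (hw : ∀ u v, 0 ≤ w u v)
    {S T : Finset α} {k : ℝ} (hk : 0 ≤ k) (hvol : vol w S ≤ vol w T)
    (hcut : cut w T Tᶜ ≤ k * cut w S Sᶜ) :
    condOf w T ≤ k * condOf w S := by
  have hcutS := cut_nonneg w hw S Sᶜ
  rcases (vol_nonneg w hw S).eq_or_lt with h0 | hpos
  · -- `vol S = 0` forces `w(S, V∖S) = 0`, hence `w(T, V∖T) = 0`: both sides vanish.
    have hS : cut w S Sᶜ = 0 := le_antisymm (h0 ▸ cut_le_vol w hw S Sᶜ) hcutS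
    have hT : cut w T Tᶜ = 0 := le_antisymm (by simpa [hS] using hcut) (cut_nonneg w hw T Tᶜ)
    simp [condOf, hS, hT]
  · rw [condOf, condOf, ← mul_div_assoc]
    exact div_le_div₀ (mul_nonneg hk hcutS) hcut hpos hvol

end Cut

theorem cond_P_le_k_cond_core_general {V : Type} [Fintype V] [DecidableEq V]
    (w : V → V → ℝ) (hw : ∀ u v, 0 ≤ w u v) (hsymm : ∀ u v, w u v = w v u)
    (k : ℕ) (hk : 2 ≤ k)
    (Pi core : Finset V) (hcoreP : core ⊆ Pi)
    (havg : wto w (Pi \ core) ((Finset.univ : Finset V) \ Pi) / ((k : ℝ) - 1)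
      ≤ wto w (Pi \ core) core) :
    condOf w Pi ≤ (k : ℝ) * condOf w core := by
  have hk1 : (1 : ℝ) < k := by exact_mod_cast hk
  rw [← compl_eq_univ_sdiff, wto_eq_cut w (disjoint_compl_right.mono_left sdiff_subset),
    wto_eq_cut w sdiff_disjoint, div_le_iff₀ (by linarith)] at havg
  refine condOf_le_mul_of_cut_compl_le w hw k.cast_nonneg (vol_mono w hw hcoreP) ?_
  exact cut_compl_le_mul_of_subset w hw hsymm hcoreP hk1.le (by linarith)

/-- Let `core(P_i) ⊆ P_i ⊆ V` with `Φ_G(core(P_i)) ≤ φ_out/(k+1)`, and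
suppose `w(P_i∖core(P_i) → core(P_i)) ≥ w(P_i∖core(P_i) → V∖P_i)/(k-1)` with `k ≥ 2`.
Then `Φ_G(P_i) ≤ k · Φ_G(core(P_i))`. -/
theorem cond_P_le_k_cond_core {V : Type} [Fintype V] [DecidableEq V]
    (w : V → V → ℝ) (hw : ∀ u v, 0 ≤ w u v) (hsymm : ∀ u v, w u v = w v u)
    (k : ℕ) (hk : 2 ≤ k) (φout : ℝ)
    (Pi core : Finset V) (hcoreP : core ⊆ Pi)
    (hvol : 0 < vol w core)
    (hcond : condOf w core ≤ φout / ((k : ℝ) + 1))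
    (havg : wto w (Pi \ core) ((Finset.univ : Finset V) \ Pi) / ((k : ℝ) - 1)
      ≤ wto w (Pi \ core) core) :
    condOf w Pi ≤ (k : ℝ) * condOf w core :=
  cond_P_le_k_cond_core_general w hw hsymm k hk Pi core hcoreP havg
end
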